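/- arXiv:2404.13248 — 7 statements merged into one kernel-verified Lean document; each statement's English description precedes it below -/
import Mathlib

section
/- Define L(x) = prod_{j=1}^k x_j! / x_j^{x_j} for x = (x_1,...,x_k) a k-tuple of nonnegative integers (with the convention 0^0 = 1). Then L is Schur-concave: if y majorizes x then L(y) <= L(x). -/
/-!
A function `g` on `ℕ` with antitone increments is, on `[0, N]`, an affine function plus a
nonpositive combination of the hinges `n ↦ n - (l + 1)` (truncated subtraction). Majorization
gives equal totals and `∑ (x j - l) ≤ ∑ (y j - l)` for every `l`, so `∑ g (y j) ≤ ∑ g (x j)`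
(discrete Karamata). For `g n = log (n! / n ^ n)` the increments are `log ((n / (n + 1)) ^ n)`,
antitone because `(1 + 1 / n) ^ n` increases, which is Bernoulli's inequality for
`(1 - 1 / (n + 1) ^ 2) ^ (n + 1)`.
-/

open Finset

/-- Majorization for integer `k`-tuples: `y` majorizes `x` iff they have equal total
sum and, for every subset of indices, the corresponding partial sum of `x` is dominated
by the sum of `y` over some subset of the same cardinality (equivalently, the sorted
partial sums of `y` dominate those of `x`). -/
def NatMajorizes {k : ℕ} (y x : Fin k → ℕ) : Prop :=
  (∑ j, x j = ∑ j, y j) ∧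
    ∀ s : Finset (Fin k), ∃ t : Finset (Fin k), t.card = s.card ∧
      ∑ j ∈ s, x j ≤ ∑ j ∈ t, y j

theorem eq_add_mul_add_sum_mul_tsub (g : ℕ → ℝ) {n N : ℕ} (hn : n ≤ N) :
    g n = g 0 + n * (g 1 - g 0) + ∑ l ∈ range N,
      ((g (l + 2) - g (l + 1)) - (g (l + 1) - g l)) * ((n - (l + 1) : ℕ) : ℝ) := by
  induction n with
  | zero => simp
  | succ n ih =>
    have hinge_succ (l : ℕ) :
        ((n + 1 - (l + 1) : ℕ) : ℝ) = (n - (l + 1) : ℕ) + if l ∈ range n then 1 else 0 := by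
      by_cases hl : l < n
      · simp only [Nat.reduceSubDiff, Nat.cast_sub (show l ≤ n by omega),
          Nat.cast_sub (show l + 1 ≤ n by omega), Nat.cast_add, Nat.cast_one, mem_range, hl,
          if_true]
        ring
      · simp [hl, Nat.sub_eq_zero_of_le (show n ≤ l + 1 by omega),
          Nat.sub_eq_zero_of_le (show n ≤ l by omega)]
    have telescope := sum_range_sub (fun l => g (l + 1) - g l) n
    simp only [hinge_succ, mul_add, mul_ite, mul_one, mul_zero, sum_add_distrib, sum_ite_mem,
      range_inter_range, min_eq_right (show n ≤ N by omega)]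
    push_cast
    linarith [ih (by omega)]

theorem sum_le_sum_of_antitone_sub {ι : Type*} [Fintype ι] {g : ℕ → ℝ}
    (hg : Antitone fun n => g (n + 1) - g n) {x y : ι → ℕ} (hsum : ∑ j, x j = ∑ j, y j)
    (htsub : ∀ l, ∑ j, (x j - l) ≤ ∑ j, (y j - l)) :
    ∑ j, g (y j) ≤ ∑ j, g (x j) := by
  set N := ∑ j, x j
  have hx : ∀ j, x j ≤ N := fun j => single_le_sum (fun j _ => Nat.zero_le _) (mem_univ j)
  have hy : ∀ j, y j ≤ N :=
    fun j => hsum ▸ single_le_sum (fun j _ => Nat.zero_le _) (mem_univ j)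
  rw [sum_congr rfl fun j _ => eq_add_mul_add_sum_mul_tsub g (hx j),
    sum_congr rfl fun j _ => eq_add_mul_add_sum_mul_tsub g (hy j)]
  simp only [sum_add_distrib, ← sum_mul, ← Nat.cast_sum, ← hsum]
  rw [sum_comm, sum_comm (γ := ι)]
  simp only [← mul_sum, ← Nat.cast_sum]
  gcongr 1
  refine sum_le_sum fun l _ => ?_
  exact mul_le_mul_of_nonpos_left (by exact_mod_cast htsub (l + 1))
    (sub_nonpos.2 (hg (Nat.le_succ l)))

theorem prod_le_prod_of_antitone_div {ι : Type*} [Fintype ι] {f : ℕ → ℝ}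
    (hf : ∀ n, 0 < f n) (hf' : Antitone fun n => f (n + 1) / f n) {x y : ι → ℕ}
    (hsum : ∑ j, x j = ∑ j, y j)
    (htsub : ∀ l, ∑ j, (x j - l) ≤ ∑ j, (y j - l)) :
    ∏ j, f (y j) ≤ ∏ j, f (x j) := by
  have hlog : Antitone fun n => Real.log (f (n + 1)) - Real.log (f n) := by
    intro m n hmn
    simp only [← Real.log_div (hf _).ne' (hf _).ne']
    exact Real.log_le_log (div_pos (hf _) (hf _)) (hf' hmn)
  rw [← Real.log_le_log_iff (prod_pos fun j _ => hf _) (prod_pos fun j _ => hf _),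
    Real.log_prod fun j _ => (hf _).ne', Real.log_prod fun j _ => (hf _).ne']
  exact sum_le_sum_of_antitone_sub (g := fun n => Real.log (f n)) hlog hsum htsub

theorem NatMajorizes.sum_tsub_le {k : ℕ} {y x : Fin k → ℕ} (h : NatMajorizes y x) (l : ℕ) :
    ∑ j, (x j - l) ≤ ∑ j, (y j - l) := by
  set s := univ.filter fun j => l ≤ x j
  obtain ⟨t, hts, hst⟩ := h.2 s
  have hxs : ∑ j, (x j - l) = ∑ j ∈ s, (x j - l) :=
    (sum_filter_of_ne fun j _ hj => by omega).symm
  have hx : ∑ j ∈ s, (x j - l) + s.card * l = ∑ j ∈ s, x j := by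
    rw [← smul_eq_mul, ← sum_const, ← sum_add_distrib]
    exact sum_congr rfl fun j hj => Nat.sub_add_cancel (mem_filter.1 hj).2
  have hy : ∑ j ∈ t, y j ≤ ∑ j ∈ t, (y j - l) + t.card * l := by
    rw [← smul_eq_mul, ← sum_const, ← sum_add_distrib]
    exact sum_le_sum fun j _ => le_tsub_add
  have ht : ∑ j ∈ t, (y j - l) ≤ ∑ j, (y j - l) :=
    sum_le_sum_of_subset (subset_univ t)
  rw [hts] at hy
  omega

noncomputable def factorialDivPowSelf (n : ℕ) : ℝ := n.factorial / (n : ℝ) ^ n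

theorem factorialDivPowSelf_pos (n : ℕ) : 0 < factorialDivPowSelf n :=
  div_pos (mod_cast n.factorial_pos) (mod_cast Nat.pow_self_pos)

theorem factorialDivPowSelf_succ_div (n : ℕ) :
    factorialDivPowSelf (n + 1) / factorialDivPowSelf n = ((n : ℝ) / (n + 1)) ^ n := by
  have : (n : ℝ) ^ n ≠ 0 := mod_cast Nat.pow_self_pos.ne'
  simp only [factorialDivPowSelf, Nat.factorial_succ, div_pow]
  push_cast
  field_simp
  ring

theorem antitone_div_add_one_pow : Antitone fun n : ℕ => ((n : ℝ) / (n + 1)) ^ n := by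
  refine antitone_nat_of_succ_le fun n => ?_
  rcases Nat.eq_zero_or_pos n with rfl | hn
  · norm_num
  have hn : (0 : ℝ) < n := mod_cast hn
  set a : ℝ := n / (n + 1)
  set b : ℝ := (n + 1) / (n + 1 + 1)
  have ha : 0 < a := by positivity
  have hb : 0 < b := by positivity
  have hab : a / b = 1 + -1 / ((n : ℝ) + 1) ^ 2 := by
    simp only [a, b]; field_simp; ring
  have bernoulli : a ≤ (a / b) ^ (n + 1) := by
    rw [hab]
    refine le_trans (le_of_eq ?_) (one_add_mul_le_pow ?_ (n + 1))
    · simp only [a]; push_cast; field_simp; ring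
    · rw [neg_div, neg_le_neg_iff, div_le_iff₀ (by positivity)]
      nlinarith
  rw [div_pow, le_div_iff₀ (pow_pos hb _), pow_succ' a n] at bernoulli
  push_cast
  exact le_of_mul_le_mul_left bernoulli ha

/-- `L(x) = ∏_j x_j! / x_j^{x_j}` (with `0^0 = 1`) is Schur-concave on integer
`k`-tuples: if `y` majorizes `x` then `L(y) ≤ L(x)`. -/
theorem stmt3 (k : ℕ) (L : (Fin k → ℕ) → ℝ)
    (hL : ∀ x, L x = ∏ j, ((x j).factorial : ℝ) / ((x j : ℝ) ^ (x j)))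
    (x y : Fin k → ℕ) (hmaj : NatMajorizes y x) :
    L y ≤ L x := by
  rw [hL, hL]
  refine prod_le_prod_of_antitone_div factorialDivPowSelf_pos ?_ hmaj.1 hmaj.sum_tsub_le
  simpa only [factorialDivPowSelf_succ_div] using antitone_div_add_one_pow
end

section
/- For every positive integer n, sum_{x=0}^n |n - 2x| * C(n,x) equals n * C(n, n/2) if n is even, and equals 2n * C(n-1, (n-1)/2) if n is odd. -/
/-!
Since `(n - 2x) C(n,x) = n (C(n-1,x) - C(n-1,x-1))`, the partial sums of `(n - 2x) C(n,x)`
telescope to `n C(n-1,m)`, and the full signed sum is `0`. The terms with `x ≤ n/2` are the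
nonnegative ones, so `∑ |n - 2x| C(n,x)` is twice their sum, i.e. `2n C(n-1, ⌊n/2⌋)`.
For even `n = 2m` this equals `n C(n, m)` because `m C(2m, m) = 2m C(2m-1, m)`.
-/

open Finset

namespace Nat

theorem sub_mul_choose (n k : ℕ) : (n - k) * n.choose k = n * (n - 1).choose k := by
  cases n with
  | zero => simp
  | succ n => rw [Nat.add_sub_cancel, mul_comm, ← choose_mul_succ_eq, mul_comm]

theorem add_one_mul_choose_add_one (n k : ℕ) :
    (k + 1) * n.choose (k + 1) = n * (n - 1).choose k := by
  cases n with
  | zero => simp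
  | succ n => rw [Nat.add_sub_cancel, add_one_mul_choose_eq, mul_comm]

theorem sum_range_sub_two_mul_mul_choose (n m : ℕ) :
    ∑ x ∈ range (m + 1), ((n : ℤ) - 2 * x) * n.choose x = n * (n - 1).choose m := by
  induction m with
  | zero => simp
  | succ m ih =>
    have hlow : ((m : ℤ) + 1) * n.choose (m + 1) = n * (n - 1).choose m := by
      exact_mod_cast add_one_mul_choose_add_one n m
    have hup : ((n : ℤ) - (m + 1)) * n.choose (m + 1) = n * (n - 1).choose (m + 1) := by
      rcases le_or_gt (m + 1) n with h | h
      · exact_mod_cast sub_mul_choose n (m + 1)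
      · rw [choose_eq_zero_of_lt h, choose_eq_zero_of_lt (by omega)]
        simp
    rw [sum_range_succ, ih]
    push_cast
    linear_combination hup - hlow

theorem sum_range_sub_two_mul_mul_choose_eq_zero (n : ℕ) :
    ∑ x ∈ range (n + 1), ((n : ℤ) - 2 * x) * n.choose x = 0 := by
  rw [sum_range_sub_two_mul_mul_choose]
  cases n with
  | zero => simp
  | succ n => simp

theorem sum_range_natAbs_sub_two_mul_mul_choose (n : ℕ) :
    ∑ x ∈ range (n + 1), ((n : ℤ) - 2 * x).natAbs * n.choose x
      = 2 * n * (n - 1).choose (n / 2) := by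
  have hle : n / 2 + 1 ≤ n + 1 := by omega
  have hsigned : n * (n - 1).choose (n / 2)
      + ∑ x ∈ Ico (n / 2 + 1) (n + 1), ((n : ℤ) - 2 * x) * n.choose x = 0 := by
    rw [← sum_range_sub_two_mul_mul_choose, sum_range_add_sum_Ico _ hle,
      sum_range_sub_two_mul_mul_choose_eq_zero]
  have hlow : ∀ x ∈ range (n / 2 + 1),
      |(n : ℤ) - 2 * x| * n.choose x = ((n : ℤ) - 2 * x) * n.choose x := by
    intro x hx
    rw [mem_range] at hx
    rw [abs_of_nonneg (by omega)]
  have hhigh : ∀ x ∈ Ico (n / 2 + 1) (n + 1),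
      |(n : ℤ) - 2 * x| * n.choose x = -(((n : ℤ) - 2 * x) * n.choose x) := by
    intro x hx
    rw [mem_Ico] at hx
    rw [abs_of_neg (by omega), neg_mul]
  zify
  rw [← sum_range_add_sum_Ico _ hle, sum_congr rfl hlow, sum_congr rfl hhigh, sum_neg_distrib,
    sum_range_sub_two_mul_mul_choose]
  linear_combination (-1 : ℤ) * hsigned

end Nat

theorem stmt5_general (n : ℕ) :
    (Even n →
      ∑ x ∈ Finset.range (n + 1), ((n : ℤ) - 2 * x).natAbs * n.choose x
        = n * n.choose (n / 2)) ∧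
    (Odd n →
      ∑ x ∈ Finset.range (n + 1), ((n : ℤ) - 2 * x).natAbs * n.choose x
        = 2 * n * (n - 1).choose ((n - 1) / 2)) := by
  rw [Nat.sum_range_natAbs_sub_two_mul_mul_choose]
  constructor
  · rintro ⟨m, rfl⟩
    have hcentral := Nat.sub_mul_choose (m + m) m
    rw [Nat.add_sub_cancel] at hcentral
    rw [show (m + m) / 2 = m by omega]
    linarith
  · rintro ⟨m, rfl⟩
    rw [show (2 * m + 1) / 2 = (2 * m + 1 - 1) / 2 by omega]

/-- `∑_{x=0}^n |n-2x| C(n,x)` equals `n·C(n,n/2)` for even `n`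
and `2n·C(n-1,(n-1)/2)` for odd `n`. -/
theorem stmt5 (n : ℕ) (hn : 0 < n) :
    (Even n →
      ∑ x ∈ Finset.range (n + 1), ((n : ℤ) - 2 * x).natAbs * n.choose x
        = n * n.choose (n / 2)) ∧
    (Odd n →
      ∑ x ∈ Finset.range (n + 1), ((n : ℤ) - 2 * x).natAbs * n.choose x
        = 2 * n * (n - 1).choose ((n - 1) / 2)) :=
  stmt5_general n
end

section
/- For the Binomial(n, 1/2) pmf f(x) = C(n,x)/2^n, we have sum_{x=0}^n (n - |n-2x|) f(x) = n(1 - C(n, n/2)/2^n) if n is even, and sum_{x=0}^n (n - |n-2x|) f(x) = n(1 - C(n-1,(n-1)/2)/2^{n-1}) if n is odd. -/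
open Finset

lemma tele (n : ℕ) : ∀ m, m + 1 ≤ n →
    ∑ x ∈ range (m+1), ((n:ℝ) - 2*x) * (n.choose x) = n * ((n-1).choose m) := by
  intro m
  induction m with
  | zero => intro h; simp [Nat.choose_zero_right]
  | succ m ih =>
    intro h
    rw [sum_range_succ, ih (by omega)]
    have h1 : n * ((n-1).choose m) = (n.choose (m+1)) * (m+1) := by
      have := Nat.add_one_mul_choose_eq (n-1) m
      have hn : n - 1 + 1 = n := by omega
      simp only [Nat.succ_eq_add_one, hn] at this
      exact this
    have h2 : ((n-1).choose (m+1)) * n = (n.choose (m+1)) * (n - (m+1)) := by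
      have := Nat.choose_mul_succ_eq (n-1) (m+1)
      have hn : n - 1 + 1 = n := by omega
      simp only [hn] at this
      exact this
    have c1 : (n : ℝ) * ((n-1).choose m) = (n.choose (m+1)) * (m+1) := by
      exact_mod_cast congrArg (fun x : ℕ => (x : ℝ)) h1
    have c2 : ((n-1).choose (m+1) : ℝ) * n = (n.choose (m+1)) * ((n:ℝ) - (m+1)) := by
      have := congrArg (fun x : ℕ => (x : ℝ)) h2
      push_cast [Nat.cast_sub (show m+1 ≤ n by omega)] at this
      linarith [this]
    push_cast
    nlinarith [c1, c2]

lemma sumabs (n : ℕ) (hn : 0 < n) :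
    ∑ x ∈ range (n+1), |(n:ℝ) - 2*x| * (n.choose x)
      = 2 * (n * ((n-1).choose (n/2))) := by
  set m := n / 2 with hm
  have hmn : m + 1 ≤ n := by omega
  set g : ℕ → ℝ := fun x => |(n:ℝ) - 2*x| * (n.choose x) with hg
  have gsymm : ∀ j ≤ n, g (n - j) = g j := by
    intro j hj
    simp only [hg]
    rw [Nat.choose_symm hj, Nat.cast_sub hj]
    congr 1
    rw [show (n:ℝ) - 2*((n:ℝ) - j) = -((n:ℝ) - 2*j) by ring, abs_neg]
  have hA : ∑ x ∈ range (m+1), g x = n * ((n-1).choose m) := by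
    rw [← tele n m hmn]
    refine sum_congr rfl fun x hx => ?_
    simp only [mem_range] at hx
    have h2x : 2 * x ≤ n := by omega
    simp only [hg]
    rw [abs_of_nonneg]
    have : (2*x : ℝ) ≤ n := by exact_mod_cast h2x
    linarith
  have hB : ∑ i ∈ range (n - m), g (m + 1 + i) = ∑ j ∈ range (n - m), g j := by
    rw [← Finset.sum_range_reflect (fun i => g (m + 1 + i)) (n - m)]
    refine sum_congr rfl fun j hj => ?_
    simp only [mem_range] at hj
    rw [show m + 1 + (n - m - 1 - j) = n - j by omega]
    exact gsymm j (by omega)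
  have hsplit : ∑ x ∈ range (n+1), g x
      = ∑ x ∈ range (m+1), g x + ∑ i ∈ range (n - m), g (m + 1 + i) := by
    rw [show n + 1 = (m + 1) + (n - m) by omega, Finset.sum_range_add]
  rw [hsplit, hB]
  rcases Nat.even_or_odd n with he | ho
  · obtain ⟨k, hk⟩ := he
    have hnm : n - m = m := by omega
    have hn2m : n = 2 * m := by omega
    rw [hnm]
    have : ∑ x ∈ range (m+1), g x = ∑ x ∈ range m, g x + g m := sum_range_succ g m
    have hgm : g m = 0 := by
      simp only [hg]
      rw [show ((n:ℝ) - 2*m) = 0 by rw [hn2m]; push_cast; ring]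
      simp
    rw [this, hgm, add_zero] at hA ⊢
    rw [hA]; ring
  · obtain ⟨k, hk⟩ := ho
    have hnm : n - m = m + 1 := by omega
    rw [hnm, hA]; ring

/-- For the Binomial(n, 1/2) pmf `f(x) = C(n,x)/2^n`,
`∑_{x=0}^n (n - |n-2x|) f(x)` equals `n(1 - C(n,n/2)/2^n)` for even `n`
and `n(1 - C(n-1,(n-1)/2)/2^{n-1})` for odd `n`. -/
theorem stmt6 (n : ℕ) (hn : 0 < n) :
    (Even n →
      ∑ x ∈ Finset.range (n + 1),
          ((n : ℝ) - |(n : ℝ) - 2 * x|) * ((n.choose x : ℝ) / 2 ^ n)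
        = n * (1 - (n.choose (n / 2) : ℝ) / 2 ^ n)) ∧
    (Odd n →
      ∑ x ∈ Finset.range (n + 1),
          ((n : ℝ) - |(n : ℝ) - 2 * x|) * ((n.choose x : ℝ) / 2 ^ n)
        = n * (1 - ((n - 1).choose ((n - 1) / 2) : ℝ) / 2 ^ (n - 1))) := by
  have hchoose : (∑ x ∈ range (n+1), (n.choose x : ℝ)) = 2 ^ n := by
    exact_mod_cast congrArg (fun x : ℕ => (x : ℝ)) (Nat.sum_range_choose n)
  have key : ∑ x ∈ Finset.range (n + 1),
      ((n : ℝ) - |(n : ℝ) - 2 * x|) * ((n.choose x : ℝ) / 2 ^ n)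
      = ((n : ℝ) * 2 ^ n - 2 * (n * ((n-1).choose (n/2)))) / 2 ^ n := by
    calc ∑ x ∈ Finset.range (n + 1),
          ((n : ℝ) - |(n : ℝ) - 2 * x|) * ((n.choose x : ℝ) / 2 ^ n)
        = (∑ x ∈ range (n+1), ((n:ℝ) * (n.choose x) - |(n:ℝ) - 2*x| * (n.choose x))) / 2 ^ n := by
          rw [Finset.sum_div]
          exact sum_congr rfl fun x _ => by ring
      _ = ((n : ℝ) * 2 ^ n - 2 * (n * ((n-1).choose (n/2)))) / 2 ^ n := by
          rw [Finset.sum_sub_distrib, ← Finset.mul_sum, hchoose, sumabs n hn]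
  constructor
  · intro he
    obtain ⟨k, hk⟩ := he
    have hk' : n = 2 * k := by omega
    have hk1 : 1 ≤ k := by omega
    have hc : n.choose (n/2) = 2 * ((n-1).choose (n/2)) := by
      have hd : n / 2 = k := by omega
      rw [hd, hk']
      have e1 : 2 * k = (2*k - 1) + 1 := by omega
      have e2 : k = (k - 1) + 1 := by omega
      rw [show (2*k).choose k = ((2*k-1)+1).choose ((k-1)+1) by rw [← e1, ← e2]]
      rw [Nat.choose_succ_succ]
      have : (2*k-1).choose (k-1) = (2*k-1).choose k := by
        rw [show k - 1 = (2*k-1) - k by omega]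
        exact Nat.choose_symm (by omega)
      rw [this]
      have e3 : (k-1).succ = k := by omega
      rw [e3]
      omega
    rw [key, hc]
    have h2 : (0:ℝ) < 2 ^ n := by positivity
    push_cast
    field_simp
  · intro ho
    obtain ⟨k, hk⟩ := ho
    have hd : (n - 1) / 2 = n / 2 := by omega
    rw [key, hd]
    have hp : (2:ℝ) ^ n = 2 * 2 ^ (n - 1) := by
      rw [← pow_succ']
      congr 1
      omega
    have h2 : (0:ℝ) < 2 ^ (n-1) := by positivity
    rw [hp]
    field_simp
end

section
/- Let n >= 4 and let d_1,...,d_n be a strictly convex sequence of reals (i.e., d_{m+1} - d_m is strictly increasing in m). For integers x with n/2 + 1 <= x <= n, define D_x = (1/(2x - n - 1)) * sum_{m = n - x + 2}^{x} d_m. Then D_x is strictly increasing in x on this range. -/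
/-!
Write `S` for the sum over the window of `D x` and `e = d (n - x + 1) + d (x + 1)` for the two
terms that enter when passing to `D (x + 1)`; then `D x < D (x + 1)` amounts to `2 S < (2x - n - 1) e`.
Pairing each `m` in the window with its mirror image, every pair sums to less than `e`: the
increments `d (m + 1) - d m` of a strictly convex sequence increase, so moving two indices
with a fixed sum apart increases `d i + d j`.
-/

open Finset

section ConvexSequence

variable {d : ℕ → ℝ} {lo hi : ℕ}

theorem strictMonoOn_sub_of_two_mul_lt (n : ℕ)
    (hconv : ∀ m : ℕ, 2 ≤ m → m ≤ n - 1 → 2 * d m < d (m - 1) + d (m + 1)) :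
    StrictMonoOn (fun m => d (m + 1) - d m) (Set.Icc 1 (n - 1)) := by
  refine strictMonoOn_of_lt_add_one Set.ordConnected_Icc fun m _ hm hm1 => ?_
  have h := hconv (m + 1) (Nat.succ_le_succ hm.1) hm1.2
  simp only [Nat.add_sub_cancel] at h
  linarith

theorem sub_eq_sum_range_sub (d : ℕ → ℝ) (p k : ℕ) :
    d (p + k) - d p = ∑ t ∈ range k, (d (p + t + 1) - d (p + t)) :=
  (sum_range_sub (fun t => d (p + t)) k).symm

theorem add_lt_add_of_strictMonoOn_sub
    (hΔ : StrictMonoOn (fun m => d (m + 1) - d m) (Set.Icc lo hi))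
    {p q i j : ℕ} (hlo : lo ≤ p) (hhi : q ≤ hi + 1) (hpi : p < i) (hij : i ≤ j)
    (hsum : i + j = p + q) : d i + d j < d p + d q := by
  obtain ⟨k, rfl⟩ : ∃ k, i = p + k := ⟨i - p, by omega⟩
  obtain rfl : q = j + k := by omega
  have hinc : ∑ t ∈ range k, (d (p + t + 1) - d (p + t))
      < ∑ t ∈ range k, (d (j + t + 1) - d (j + t)) :=
    sum_lt_sum_of_nonempty (nonempty_range_iff.mpr (by omega)) fun t ht => by
      have ht := mem_range.mp ht
      exact hΔ ⟨by omega, by omega⟩ ⟨by omega, by omega⟩ (by omega)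
  linarith [sub_eq_sum_range_sub d p k, sub_eq_sum_range_sub d j k]

theorem sum_Ioo_reflect (d : ℕ → ℝ) (p q : ℕ) :
    ∑ m ∈ Ioo p q, d (p + q - m) = ∑ m ∈ Ioo p q, d m := by
  refine sum_nbij' (fun m => p + q - m) (fun m => p + q - m) ?_ ?_ ?_ ?_ fun _ _ => rfl
  all_goals intro m; simp only [mem_Ioo, and_imp]; omega

theorem two_mul_sum_Ioo_lt
    (hΔ : StrictMonoOn (fun m => d (m + 1) - d m) (Set.Icc lo hi))
    {p q : ℕ} (hlo : lo ≤ p) (hhi : q ≤ hi + 1) (hpq : p + 1 < q) :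
    2 * ∑ m ∈ Ioo p q, d m < ((q : ℝ) - p - 1) * (d p + d q) := by
  have hpair : ∀ m ∈ Ioo p q, d m + d (p + q - m) < d p + d q := by
    intro m hm
    have hm := mem_Ioo.mp hm
    rcases le_total m (p + q - m) with h | h
    · exact add_lt_add_of_strictMonoOn_sub hΔ hlo hhi hm.1 h (by omega)
    · rw [add_comm]
      exact add_lt_add_of_strictMonoOn_sub hΔ hlo hhi (by omega) h (by omega)
  calc 2 * ∑ m ∈ Ioo p q, d m = ∑ m ∈ Ioo p q, (d m + d (p + q - m)) := by
        rw [sum_add_distrib, sum_Ioo_reflect, two_mul]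
    _ < ∑ _m ∈ Ioo p q, (d p + d q) :=
        sum_lt_sum_of_nonempty ⟨p + 1, by simpa using hpq⟩ hpair
    _ = ((q : ℝ) - p - 1) * (d p + d q) := by
        rw [sum_const, Nat.card_Ioo, nsmul_eq_mul, Nat.cast_sub (by omega), Nat.cast_sub (by omega)]
        push_cast
        ring

end ConvexSequence

theorem div_lt_add_div_add_two {S e k : ℝ} (hk : 0 < k) (h : 2 * S < k * e) :
    S / k < (S + e) / (k + 2) := by
  rw [div_lt_div_iff₀ hk (by linarith)]
  linarith

theorem stmt8_general (n : ℕ) (d : ℕ → ℝ)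
    (hconv : ∀ m : ℕ, 2 ≤ m → m ≤ n - 1 → 2 * d m < d (m - 1) + d (m + 1))
    (D : ℕ → ℝ)
    (hD : ∀ x, D x = (∑ m ∈ Finset.Icc (n - x + 2) x, d m) / (2 * (x : ℝ) - n - 1)) :
    ∀ x : ℕ, (n : ℝ) / 2 + 1 ≤ (x : ℝ) → x < n → D x < D (x + 1) := by
  intro x hx hxn
  have h2x : n + 2 ≤ 2 * x := by exact_mod_cast (by linarith : (n : ℝ) + 2 ≤ 2 * x)
  have hwindow : Icc (n - x + 2) x = Ioo (n - x + 1) (x + 1) := by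
    ext; simp only [mem_Icc, mem_Ioo]; omega
  have hgrow : ∑ m ∈ Icc (n - (x + 1) + 2) (x + 1), d m
      = ∑ m ∈ Ioo (n - x + 1) (x + 1), d m + (d (n - x + 1) + d (x + 1)) := by
    rw [show Icc (n - (x + 1) + 2) (x + 1)
        = insert (n - x + 1) (insert (x + 1) (Ioo (n - x + 1) (x + 1))) by
          ext; simp only [mem_Icc, mem_insert, mem_Ioo]; omega,
      sum_insert (by simp only [mem_insert, mem_Ioo]; omega), sum_insert (by simp)]
    ring
  have hkey := two_mul_sum_Ioo_lt (strictMonoOn_sub_of_two_mul_lt n hconv) (p := n - x + 1)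
    (q := x + 1) (by omega) (by omega) (by omega)
  have hcast : ((x + 1 : ℕ) : ℝ) - (n - x + 1 : ℕ) - 1 = 2 * x - n - 1 := by
    push_cast [Nat.cast_sub (by omega : x ≤ n)]
    ring
  rw [hD, hD, hwindow, hgrow, show 2 * ((x + 1 : ℕ) : ℝ) - n - 1 = 2 * x - n - 1 + 2 by
    push_cast; ring]
  rw [hcast] at hkey
  exact div_lt_add_div_add_two (by linarith) hkey

/-- Averaging lemma: if `d₁,…,d_n` is a strictly convex sequence and, for integers
`n/2 + 1 ≤ x ≤ n`, `D_x = (∑_{m=n-x+2}^x d_m)/(2x-n-1)`, then `D_x` is strictly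
increasing in `x` on this range. -/
theorem stmt8 (n : ℕ) (hn : 4 ≤ n) (d : ℕ → ℝ)
    (hconv : ∀ m : ℕ, 2 ≤ m → m ≤ n - 1 → 2 * d m < d (m - 1) + d (m + 1))
    (D : ℕ → ℝ)
    (hD : ∀ x, D x = (∑ m ∈ Finset.Icc (n - x + 2) x, d m) / (2 * (x : ℝ) - n - 1)) :
    ∀ x : ℕ, (n : ℝ) / 2 + 1 ≤ (x : ℝ) → x < n → D x < D (x + 1) :=
  stmt8_general n d hconv D hD
end

section
/- For an integer n >= 2 and integers x in the range n/2 + 1 <= x <= n, the quantity Q(x) = (x/(n - x + 1))^{1/(2x - n - 1)} is strictly increasing in x (for x where the exponent is positive), equivalently log Q(x) = (log x - log(n - x + 1))/(2x - n - 1) is strictly increasing. -/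
/-!
Centre the interval `[n - x + 1, x]` at `c = (n + 1) / 2` and write `x = c + s`. Then
`log Q(x) = h(s) / (2s)` with `h(s) = log (c + s) - log (c - s)`, and passing from `x` to `x + 1`
increases `s` by one. Since `h'(s) = 2c / (c² - s²)` increases on `[0, c)`, `h` is strictly convex
there, so its secant slope from `h(0) = 0`, namely `h(s) / s`, is strictly increasing.
-/

open Real Set

lemma hasDerivAt_log_add_sub_log_sub {c s : ℝ} (h₁ : 0 < c + s) (h₂ : 0 < c - s) :
    HasDerivAt (fun t => log (c + t) - log (c - t)) (2 * c / (c ^ 2 - s ^ 2)) s := by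
  have hadd : HasDerivAt (fun t => log (c + t)) (1 / (c + s)) s := by
    simpa using ((hasDerivAt_id s).const_add c).log h₁.ne'
  have hsub : HasDerivAt (fun t => log (c - t)) (-1 / (c - s)) s := by
    simpa using ((hasDerivAt_id s).const_sub c).log h₂.ne'
  refine (hadd.sub hsub).congr_deriv ?_
  rw [show c ^ 2 - s ^ 2 = (c + s) * (c - s) by ring]
  field_simp
  ring

lemma strictConvexOn_log_add_sub_log_sub (c : ℝ) :
    StrictConvexOn ℝ (Ico 0 c) (fun s => log (c + s) - log (c - s)) := by
  have hderiv : ∀ s ∈ Ico 0 c,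
      HasDerivAt (fun t => log (c + t) - log (c - t)) (2 * c / (c ^ 2 - s ^ 2)) s :=
    fun s hs => hasDerivAt_log_add_sub_log_sub (by linarith [hs.1, hs.2]) (by linarith [hs.2])
  refine StrictMonoOn.strictConvexOn_of_deriv (convex_Ico 0 c)
    (fun s hs => (hderiv s hs).continuousAt.continuousWithinAt) ?_
  rw [interior_Ico]
  intro s hs t ht hst
  rw [(hderiv s (Ioo_subset_Ico_self hs)).deriv, (hderiv t (Ioo_subset_Ico_self ht)).deriv]
  have hc : 0 < c := hs.1.trans hs.2
  gcongr
  · nlinarith [ht.1, ht.2]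
  · nlinarith [hs.1]

lemma strictMonoOn_log_add_sub_log_sub_div (c : ℝ) :
    StrictMonoOn (fun s => (log (c + s) - log (c - s)) / s) (Ioo 0 c) := by
  intro s hs t ht hst
  have hsecant := (strictConvexOn_log_add_sub_log_sub c).secant_strict_mono
    (left_mem_Ico.2 (hs.1.trans hs.2)) (Ioo_subset_Ico_self hs) (Ioo_subset_Ico_self ht)
    hs.1.ne' ht.1.ne' hst
  simpa using hsecant

theorem stmt9_general (n : ℕ) (Lq : ℕ → ℝ)
    (hLq : ∀ x, Lq x =
      (Real.log x - Real.log ((n : ℝ) - x + 1)) / (2 * (x : ℝ) - n - 1)) :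
    ∀ x : ℕ, (n : ℝ) / 2 + 1 ≤ (x : ℝ) → x < n → Lq x < Lq (x + 1) := by
  intro x hx hxn
  have hxn' : (x : ℝ) + 1 ≤ n := by exact_mod_cast hxn
  set c : ℝ := (n + 1) / 2 with hc
  have key := strictMonoOn_log_add_sub_log_sub_div c
    (a := x - c) (b := x + 1 - c) ⟨by linarith, by linarith⟩ ⟨by linarith, by linarith⟩
    (by linarith)
  have hLq' : ∀ y : ℕ, Lq y = (log (c + (y - c)) - log (c - (y - c))) / (y - c) / 2 := by
    intro y
    rw [hLq, div_div, add_sub_cancel, show c - (y - c) = n - y + 1 by rw [hc]; ring,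
      show (y - c) * 2 = 2 * y - n - 1 by rw [hc]; ring]
  rw [hLq' x, hLq' (x + 1)]
  push_cast
  linarith

/-- For `n ≥ 2` and integers `x` with `n/2 + 1 ≤ x ≤ n`,
`log Q(x) = (log x - log(n-x+1))/(2x-n-1)` is strictly increasing in `x`;
equivalently `Q(x) = (x/(n-x+1))^{1/(2x-n-1)}` is strictly increasing. -/
theorem stmt9 (n : ℕ) (hn : 2 ≤ n) (Lq : ℕ → ℝ)
    (hLq : ∀ x, Lq x =
      (Real.log x - Real.log ((n : ℝ) - x + 1)) / (2 * (x : ℝ) - n - 1)) :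
    ∀ x : ℕ, (n : ℝ) / 2 + 1 ≤ (x : ℝ) → x < n → Lq x < Lq (x + 1) :=
  stmt9_general n Lq hLq
end

section
/- Let f_p(x) = C(n,x) p^x (1-p)^{n-x} be the Binomial(n,p) pmf. For 1/2 < p <= 1 and n/2 < x <= n: f_p(x)/f_p(n-x) = t^{2x-n} > 1 where t = p/(1-p); and f_p(x) < f_p(n-x+1), = , or > according as t < a_n(x), t = a_n(x), or t > a_n(x), where a_n(x) = (x/(n-x+1))^{1/(2x-n-1)} (assume 2x - n - 1 > 0 for the second claim, and p < 1 so t is finite). -/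
/-!
Put `q = 1 - p` and `t = p / q`. Reflection `x ↦ n - x` keeps the binomial coefficient and trades
`2x - n` factors `p` for factors `q`, so `f x = t ^ (2x - n) f (n - x)`. One step up,
`f (n - x + 1) (n - x + 1) = t x f (n - x)`, whence `f (n - x + 1) t ^ j = (x / (n - x + 1)) f x`
with `j = 2x - n - 1`. Since `a ^ j = x / (n - x + 1)`, comparing `f x` with `f (n - x + 1)` is
comparing `t ^ j` with `a ^ j`.
-/

def binomTerm {K : Type*} [CommSemiring K] (n : ℕ) (p q : K) (z : ℕ) : K :=
  n.choose z * p ^ z * q ^ (n - z)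

section CommSemiring

variable {K : Type*} [CommSemiring K] {n x k : ℕ} (p q : K)

theorem binomTerm_mul_pow_reflect (hx : n ≤ 2 * x) (hxn : x ≤ n) :
    binomTerm n p q x * q ^ (2 * x - n) = binomTerm n p q (n - x) * p ^ (2 * x - n) := by
  have hp : p ^ x = p ^ (n - x) * p ^ (2 * x - n) := by rw [← pow_add]; congr 1; omega
  have hq : q ^ (n - (n - x)) = q ^ (n - x) * q ^ (2 * x - n) := by rw [← pow_add]; congr 1; omega
  rw [binomTerm, binomTerm, Nat.choose_symm hxn, hp, hq]
  ring

theorem binomTerm_succ_mul (hk : k < n) :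
    binomTerm n p q (k + 1) * (k + 1 : ℕ) * q = binomTerm n p q k * (n - k : ℕ) * p := by
  have hq : q ^ (n - k) = q ^ (n - (k + 1)) * q := by rw [← pow_succ]; congr 1; omega
  have hlhs : binomTerm n p q (k + 1) * (k + 1 : ℕ) * q =
      ((n.choose (k + 1) * (k + 1) : ℕ) : K) * p ^ (k + 1) * q ^ (n - k) := by
    rw [binomTerm, hq]; push_cast; ring
  rw [hlhs, Nat.choose_succ_right_eq, binomTerm]
  push_cast
  ring

end CommSemiring

theorem binomTerm_reflect_succ {K : Type*} [CommRing K] [IsDomain K] {n x : ℕ} (p : K) {q : K}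
    (hq : q ≠ 0) (hx : n < 2 * x) (hxn : x ≤ n) :
    binomTerm n p q (n - x + 1) * (n - x + 1 : ℕ) * p ^ (2 * x - n - 1) =
      binomTerm n p q x * x * q ^ (2 * x - n - 1) := by
  have hstep := binomTerm_succ_mul p q (n := n) (k := n - x) (by omega)
  have hrefl := binomTerm_mul_pow_reflect p q hx.le hxn
  rw [Nat.sub_sub_self hxn] at hstep
  rw [show 2 * x - n = 2 * x - n - 1 + 1 by omega, pow_succ, pow_succ] at hrefl
  refine mul_right_cancel₀ hq ?_
  linear_combination p ^ (2 * x - n - 1) * hstep - (x : K) * hrefl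

section OrderedSemiring

variable {K : Type*} [CommSemiring K] [LinearOrder K] [IsStrictOrderedRing K]

theorem binomTerm_pos {n : ℕ} {p q : K} (hp : 0 < p) (hq : 0 < q) {z : ℕ} (hz : z ≤ n) :
    0 < binomTerm n p q z := by
  unfold binomTerm
  have := Nat.choose_pos hz
  positivity

theorem lt_of_mul_pow_eq_mul_pow {u v s t : K} {j : ℕ} (h : u * s ^ j = v * t ^ j) (hv : 0 < v)
    (hs : 0 ≤ s) (hst : s < t) (hj : j ≠ 0) : v < u := by
  refine lt_of_mul_lt_mul_right (a := s ^ j) ?_ (pow_nonneg hs j)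
  rw [h]
  exact mul_lt_mul_of_pos_left (pow_lt_pow_left₀ hst hs hj) hv

end OrderedSemiring

theorem binomTerm_div_reflect {K : Type*} [Field K] [LinearOrder K] [IsStrictOrderedRing K]
    {n x : ℕ} {p q : K} (hp : 0 < p) (hq : 0 < q) (hx : n ≤ 2 * x) (hxn : x ≤ n) :
    binomTerm n p q x / binomTerm n p q (n - x) = (p / q) ^ (2 * x - n) := by
  rw [div_eq_iff (binomTerm_pos hp hq (Nat.sub_le n x)).ne', div_pow, div_mul_eq_mul_div,
    eq_div_iff (pow_pos hq _).ne', mul_comm (p ^ _)]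
  exact binomTerm_mul_pow_reflect p q hx hxn

/-- For the Binomial(n,p) pmf with `1/2 < p < 1` and `n/2 < x ≤ n`, setting
`t = p/(1-p)`: `f_p(x)/f_p(n-x) = t^{2x-n} > 1`; and if moreover `2x - n - 1 > 0`
then, with `a_n(x) = (x/(n-x+1))^{1/(2x-n-1)}`, `f_p(x)` is `<`, `=`, or `>`
`f_p(n-x+1)` according as `t < a_n(x)`, `t = a_n(x)`, or `t > a_n(x)`. -/
theorem stmt12 (n x : ℕ) (p : ℝ) (hp : 1 / 2 < p) (hp1 : p < 1)
    (hx : (n : ℝ) / 2 < x) (hxn : x ≤ n)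
    (f : ℕ → ℝ) (hf : ∀ z, f z = (n.choose z : ℝ) * p ^ z * (1 - p) ^ (n - z))
    (t : ℝ) (ht : t = p / (1 - p))
    (a : ℝ) (ha : a = ((x : ℝ) / ((n : ℝ) - x + 1)) ^ ((1 : ℝ) / (2 * (x : ℝ) - n - 1))) :
    (f x / f (n - x) = t ^ (2 * x - n) ∧ 1 < t ^ (2 * x - n)) ∧
    (n + 1 < 2 * x →
      ((t < a → f x < f (n - x + 1)) ∧
       (t = a → f x = f (n - x + 1)) ∧
       (a < t → f (n - x + 1) < f x))) := by
  obtain rfl : f = binomTerm n p (1 - p) := funext hf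
  have hp0 : 0 < p := by linarith
  have hq : 0 < 1 - p := by linarith
  have ht1 : 1 < t := by rw [ht, one_lt_div hq]; linarith
  have ht0 : 0 < t := zero_lt_one.trans ht1
  have h2x : n < 2 * x := by exact_mod_cast (show (n : ℝ) < 2 * x by linarith)
  refine ⟨⟨ht ▸ binomTerm_div_reflect hp0 hq h2x.le hxn, one_lt_pow₀ ht1 (by omega)⟩, fun hxj => ?_⟩
  set j := 2 * x - n - 1 with hj
  have hj0 : j ≠ 0 := by omega
  have hd : ((n - x + 1 : ℕ) : ℝ) = n - x + 1 := by push_cast [Nat.cast_sub hxn]; ring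
  have hc : 0 ≤ (x : ℝ) / (n - x + 1) := by rw [← hd]; positivity
  have haj : a ^ j = x / (n - x + 1 : ℕ) := by
    have hjR : 2 * (x : ℝ) - n - 1 = j := by
      rw [hj, Nat.cast_sub (by omega), Nat.cast_sub h2x.le]; push_cast; ring
    rw [ha, hjR, one_div, hd, Real.rpow_inv_natCast_pow hc hj0]
  have ha0 : 0 ≤ a := ha ▸ Real.rpow_nonneg hc _
  have key : binomTerm n p (1 - p) (n - x + 1) * t ^ j = binomTerm n p (1 - p) x * a ^ j := by
    rw [haj, ht, div_pow]
    field_simp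
    linear_combination binomTerm_reflect_succ p hq.ne' h2x hxn
  have hpos {z : ℕ} (hz : z ≤ n) := binomTerm_pos hp0 hq hz
  refine ⟨fun hta => lt_of_mul_pow_eq_mul_pow key (hpos hxn) ht0.le hta hj0,
    fun hta => ?_, fun hat => lt_of_mul_pow_eq_mul_pow key.symm (hpos (by omega)) ha0 hat hj0⟩
  rw [← hta] at key
  exact (mul_right_cancel₀ (pow_ne_zero j ht0.ne') key).symm
end

section
/- For the Binomial(n, 1/2) pmf, define q(x) = #{y in {0,...,n} : f_{1/2}(x) <= f_{1/2}(y)}. Then q(x) = 1 + |n - 2x| for all x in {0,...,n}. -/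
/-!
Since `C(n, y) = C(n, n - y)`, the binomial coefficient depends only on the distance
`min y (n - y)` from `y` to the nearer end of `{0, …, n}`, and on `{0, …, n / 2}` it is strictly
increasing. Hence `f x ≤ f y` exactly when `y` lies in `[a, n - a]` for `a = min x (n - x)`, an
interval with `n - 2a + 1 = 1 + |n - 2x|` points.
-/

namespace Nat

theorem choose_lt_choose_succ {n r : ℕ} (h : 2 * (r + 1) ≤ n) :
    n.choose r < n.choose (r + 1) := by
  have hpos : 0 < n.choose r := choose_pos (by omega)
  refine Nat.lt_of_mul_lt_mul_right (a := r + 1) ?_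
  calc n.choose r * (r + 1) < n.choose r * (n - r) := Nat.mul_lt_mul_of_pos_left (by omega) hpos
    _ = n.choose (r + 1) * (r + 1) := (choose_succ_right_eq n r).symm

theorem choose_strictMonoOn (n : ℕ) : StrictMonoOn n.choose (Set.Iic (n / 2)) :=
  strictMonoOn_of_lt_add_one Set.ordConnected_Iic fun _ _ _ hr ↦
    choose_lt_choose_succ (by simp only [Set.mem_Iic] at hr; omega)

theorem choose_min_sub {n k : ℕ} (hk : k ≤ n) : n.choose (min k (n - k)) = n.choose k := by
  rcases le_total k (n - k) with h | h
  · rw [min_eq_left h]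
  · rw [min_eq_right h, choose_symm hk]

theorem choose_le_choose_iff_min_le {n x y : ℕ} (hx : x ≤ n) (hy : y ≤ n) :
    n.choose x ≤ n.choose y ↔ min x (n - x) ≤ min y (n - y) := by
  rw [← choose_min_sub hx, ← choose_min_sub hy]
  exact (choose_strictMonoOn n).le_iff_le (by simp only [Set.mem_Iic]; omega)
    (by simp only [Set.mem_Iic]; omega)

end Nat

/-- For the Binomial(n,1/2) pmf `f(x) = C(n,x)/2^n`, the count
`q(x) = #{y ∈ {0,…,n} : f(x) ≤ f(y)}` equals `1 + |n - 2x|`. -/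
theorem stmt14 (n : ℕ) (f : ℕ → ℝ) (hf : ∀ x, f x = (n.choose x : ℝ) / 2 ^ n)
    (x : ℕ) (hx : x ≤ n) :
    ((Finset.range (n + 1)).filter (fun y => f x ≤ f y)).card
      = 1 + ((n : ℤ) - 2 * x).natAbs := by
  have hf_le_iff (y : ℕ) : f x ≤ f y ↔ n.choose x ≤ n.choose y := by
    rw [hf, hf, div_le_div_iff_of_pos_right (by positivity), Nat.cast_le]
  have hinterval : (Finset.range (n + 1)).filter (fun y => f x ≤ f y)
      = Finset.Icc (min x (n - x)) (n - min x (n - x)) := by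
    ext y
    simp only [Finset.mem_filter, Finset.mem_range, Finset.mem_Icc, hf_le_iff]
    constructor
    · rintro ⟨hy, hle⟩
      rw [Nat.choose_le_choose_iff_min_le hx (by omega)] at hle
      omega
    · rintro ⟨hlo, hhi⟩
      exact ⟨by omega, (Nat.choose_le_choose_iff_min_le hx (by omega)).2 (by omega)⟩
  rw [hinterval, Nat.card_Icc]
  omega
end
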